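/- arXiv:1105.0457 — 2 statements merged into one kernel-verified Lean document; each statement's English description precedes it below -/
import Mathlib

section
/- Let M be an ergodic time-reversible Markov chain on a finite state space Ω with transition matrix P and stationary distribution π, with second-largest eigenvalue λ_1. For any flow f in the underlying graph of the chain, (1 − λ_1)^{-1} ≤ ρ(f)·ℓ(f), where ρ(f) is the maximum load of f and ℓ(f) is the length of a longest path carrying positive flow. -/
/-- The directed path (given as its list of vertices) `p` traverses the oriented
edge `(a,b)`: `a` is immediately followed by `b` somewhere in `p`. -/
def UsesOrientedEdge {Ω : Type*} (p : List Ω) (a b : Ω) : Prop :=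
  ∃ l₁ l₂, p = l₁ ++ a :: b :: l₂

/-- `p` is a simple directed path from `x` to `y` in the graph with adjacency
relation `adj`: the vertices of `p` are distinct, consecutive vertices are
adjacent, `p` starts at `x`, ends at `y`, and has at least one edge. -/
def IsSimplePathFrom {Ω : Type*} (adj : Ω → Ω → Prop) (p : List Ω) (x y : Ω) : Prop :=
  p.Nodup ∧ p.Chain' adj ∧ p.head? = some x ∧ p.getLast? = some y ∧ 2 ≤ p.length

/-- The total flow `f(e)` routed through the oriented edge `e = (a,b)`. -/
noncomputable def flowEdge {Ω : Type*} (f : List Ω → ℝ) (a b : Ω) : ℝ :=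
  ∑ᶠ p ∈ {p : List Ω | UsesOrientedEdge p a b}, f p

/-!
Let `ψ` be an eigenvector for `λ ≠ 1` and `V = ∑ π x ψ x ^ 2`. Reversibility makes `ψ`
orthogonal to the constants in `L²(π)`, so `∑ π x π y (ψ x - ψ y) ^ 2 = 2 V`, while the
Dirichlet form `∑ π x P x y (ψ x - ψ y) ^ 2` equals `2 (1 - λ) V`. Routing each demand
`π x π y` along the flow and applying Cauchy–Schwarz to the telescoping sum along each path
(of length at most `ℓ`) bounds the first sum by `ℓ ∑ₑ f(e) (ψ a - ψ b) ^ 2`, and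
`f(e) ≤ ρ π a P a b` turns this into the Poincaré inequality `2 V ≤ ρ ℓ · 2 (1 - λ) V`.
-/

theorem List.consecutivePairs_cons_cons {α : Type*} (a b : α) (l : List α) :
    (a :: b :: l).consecutivePairs = (a, b) :: (b :: l).consecutivePairs := rfl

theorem usesOrientedEdge_cons {Ω : Type*} {c a b : Ω} {l : List Ω} :
    UsesOrientedEdge (c :: l) a b ↔ (c = a ∧ l.head? = some b) ∨ UsesOrientedEdge l a b := by
  constructor
  · rintro ⟨_ | ⟨d, l₁⟩, l₂, h⟩
    · simp_all
    · simp only [List.cons_append, List.cons.injEq] at h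
      exact .inr ⟨l₁, l₂, h.2⟩
  · rintro (⟨rfl, h⟩ | ⟨l₁, l₂, rfl⟩)
    · obtain ⟨l₂, rfl⟩ : ∃ l₂, l = b :: l₂ := by cases l <;> simp_all
      exact ⟨[], l₂, rfl⟩
    · exact ⟨c :: l₁, l₂, rfl⟩

theorem usesOrientedEdge_iff_mem_consecutivePairs {Ω : Type*} {a b : Ω} :
    ∀ {p : List Ω}, UsesOrientedEdge p a b ↔ (a, b) ∈ p.consecutivePairs
  | [] => by simp [UsesOrientedEdge]
  | [c] => by rw [usesOrientedEdge_cons]; simp [UsesOrientedEdge, List.consecutivePairs]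
  | c :: d :: l => by
    rw [usesOrientedEdge_cons, usesOrientedEdge_iff_mem_consecutivePairs,
      List.consecutivePairs_cons_cons, List.mem_cons]
    simp [eq_comm]

theorem List.sum_map_consecutivePairs_sub {Ω G : Type*} [AddCommGroup G] (ψ : Ω → G) :
    ∀ {p : List Ω} {x y : Ω}, p.head? = some x → p.getLast? = some y →
      (p.consecutivePairs.map fun e => ψ e.1 - ψ e.2).sum = ψ x - ψ y
  | [c], x, y, hx, hy => by simp_all [List.consecutivePairs]
  | c :: d :: l, x, y, hx, hy => by
    rw [List.consecutivePairs_cons_cons, List.map_cons, List.sum_cons,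
      List.sum_map_consecutivePairs_sub ψ rfl (by simpa using hy)]
    simp only [List.head?_cons, Option.some.injEq] at hx
    rw [hx]
    abel

theorem List.Nodup.consecutivePairs {α : Type*} {p : List α} (h : p.Nodup) :
    p.consecutivePairs.Nodup :=
  List.Nodup.of_map Prod.snd <| by
    rw [List.map_snd_zip (by simp)]
    exact h.tail

theorem List.length_consecutivePairs {α : Type*} (p : List α) :
    p.consecutivePairs.length = p.length - 1 := by
  simp [List.consecutivePairs]

theorem IsSimplePathFrom.sq_sub_le {Ω R : Type*} [DecidableEq Ω] [CommRing R] [LinearOrder R]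
    [IsStrictOrderedRing R] {adj : Ω → Ω → Prop} {p : List Ω} {x y : Ω}
    (hp : IsSimplePathFrom adj p x y) (ψ : Ω → R) :
    (ψ x - ψ y) ^ 2 ≤
      (p.length - 1 : ℕ) * ∑ e ∈ p.consecutivePairs.toFinset, (ψ e.1 - ψ e.2) ^ 2 := by
  obtain ⟨hnodup, -, hx, hy, -⟩ := hp
  have hnodup' := hnodup.consecutivePairs
  calc (ψ x - ψ y) ^ 2 = (∑ e ∈ p.consecutivePairs.toFinset, (ψ e.1 - ψ e.2)) ^ 2 := by
        rw [List.sum_toFinset _ hnodup', List.sum_map_consecutivePairs_sub ψ hx hy]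
    _ ≤ _ := by
        rw [← List.length_consecutivePairs, ← List.toFinset_card_of_nodup hnodup']
        exact sq_sum_le_card_mul_sum_sq

theorem Finset.sum_sum_mul_sub_sq {ι R : Type*} [Fintype ι] [CommRing R] (w : ι → ι → R)
    (ψ : ι → R) :
    ∑ x, ∑ y, w x y * (ψ x - ψ y) ^ 2 =
      ∑ x, (∑ y, w x y) * ψ x ^ 2 + ∑ y, (∑ x, w x y) * ψ y ^ 2 -
        2 * ∑ x, ψ x * ∑ y, w x y * ψ y := by
  simp only [Finset.sum_mul, Finset.mul_sum]
  rw [Finset.sum_comm (f := fun y x => w x y * ψ y ^ 2), ← Finset.sum_add_distrib,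
    ← Finset.sum_sub_distrib]
  refine Finset.sum_congr rfl fun x _ => ?_
  rw [← Finset.sum_add_distrib, ← Finset.sum_sub_distrib]
  exact Finset.sum_congr rfl fun y _ => by ring

theorem Finset.sum_sum_mul_mul_sub_sq {ι R : Type*} [Fintype ι] [CommRing R] (π ψ : ι → R) :
    ∑ x, ∑ y, π x * π y * (ψ x - ψ y) ^ 2 =
      2 * ((∑ x, π x) * ∑ x, π x * ψ x ^ 2 - (∑ x, π x * ψ x) ^ 2) := by
  rw [Finset.sum_sum_mul_sub_sq]
  simp only [← Finset.sum_mul, ← Finset.mul_sum, mul_assoc]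
  have hsq : ∑ x, π x * ((∑ i, π i) * ψ x ^ 2) = (∑ i, π i) * ∑ x, π x * ψ x ^ 2 := by
    rw [Finset.mul_sum]; exact Finset.sum_congr rfl fun _ _ => by ring
  have hcross : ∑ x, ψ x * (π x * ∑ i, π i * ψ i) = (∑ x, π x * ψ x) ^ 2 := by
    rw [sq, Finset.sum_mul]; exact Finset.sum_congr rfl fun _ _ => by ring
  rw [hsq, hcross]
  ring

section Reversible

variable {Ω R : Type*} [Fintype Ω] [CommRing R] {P : Matrix Ω Ω R} {π : Ω → R}

theorem sum_mul_apply_of_reversible (hP1 : ∀ x, ∑ y, P x y = 1)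
    (hrev : ∀ x y, π x * P x y = π y * P y x) (y : Ω) : ∑ x, π x * P x y = π y := by
  simp_rw [hrev _ y, ← Finset.mul_sum, hP1, mul_one]

theorem sum_mul_eq_zero_of_mulVec_eq_smul [NoZeroDivisors R] (hP1 : ∀ x, ∑ y, P x y = 1)
    (hrev : ∀ x y, π x * P x y = π y * P y x) {ψ : Ω → R} {lam : R}
    (hψ : P.mulVec ψ = lam • ψ) (hlam1 : lam ≠ 1) : ∑ x, π x * ψ x = 0 := by
  have : lam * ∑ x, π x * ψ x = ∑ x, π x * ψ x := calc
    lam * ∑ x, π x * ψ x = ∑ x, π x * P.mulVec ψ x := by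
      simp [hψ, Finset.mul_sum, mul_left_comm]
    _ = ∑ y, (∑ x, π x * P x y) * ψ y := by
      simp only [Matrix.mulVec, dotProduct, Finset.mul_sum, Finset.sum_mul]
      rw [Finset.sum_comm]
      simp only [mul_assoc]
    _ = ∑ x, π x * ψ x := by simp_rw [sum_mul_apply_of_reversible hP1 hrev]
  have : (lam - 1) * ∑ x, π x * ψ x = 0 := by linear_combination this
  exact (mul_eq_zero.mp this).resolve_left (sub_ne_zero.mpr hlam1)

theorem sum_sum_mul_sub_sq_of_mulVec_eq_smul (hP1 : ∀ x, ∑ y, P x y = 1)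
    (hrev : ∀ x y, π x * P x y = π y * P y x) {ψ : Ω → R} {lam : R}
    (hψ : P.mulVec ψ = lam • ψ) :
    ∑ x, ∑ y, π x * P x y * (ψ x - ψ y) ^ 2 = 2 * (1 - lam) * ∑ x, π x * ψ x ^ 2 := by
  have hrow : ∀ x, ∑ y, π x * P x y * ψ y = π x * (lam * ψ x) := fun x => by
    simp_rw [mul_assoc, ← Finset.mul_sum]
    exact congrArg (π x * ·) (congrFun hψ x)
  rw [Finset.sum_sum_mul_sub_sq]
  simp_rw [← Finset.mul_sum, hP1, sum_mul_apply_of_reversible hP1 hrev, hrow]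
  have hcross : ∑ x, ψ x * (π x * (lam * ψ x)) = lam * ∑ x, π x * ψ x ^ 2 := by
    rw [Finset.mul_sum]; exact Finset.sum_congr rfl fun _ _ => by ring
  simp only [mul_one, hcross]
  ring

theorem sum_mul_sq_pos [LinearOrder R] [IsStrictOrderedRing R] (hπpos : ∀ x, 0 < π x)
    {ψ : Ω → R} (hψ0 : ψ ≠ 0) : 0 < ∑ x, π x * ψ x ^ 2 := by
  obtain ⟨x, hx⟩ := Function.ne_iff.mp hψ0
  refine Finset.sum_pos' (fun y _ => mul_nonneg (hπpos y).le (sq_nonneg _))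
    ⟨x, Finset.mem_univ x, mul_pos (hπpos x) (sq_pos_of_ne_zero hx)⟩

theorem le_one_of_mulVec_eq_smul [LinearOrder R] [IsStrictOrderedRing R]
    (hP0 : ∀ x y, 0 ≤ P x y) (hP1 : ∀ x, ∑ y, P x y = 1) (hπpos : ∀ x, 0 < π x)
    (hrev : ∀ x y, π x * P x y = π y * P y x) {ψ : Ω → R} {lam : R} (hψ0 : ψ ≠ 0)
    (hψ : P.mulVec ψ = lam • ψ) : lam ≤ 1 := by
  have hdirichlet : 0 ≤ ∑ x, ∑ y, π x * P x y * (ψ x - ψ y) ^ 2 :=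
    Finset.sum_nonneg fun x _ => Finset.sum_nonneg fun y _ =>
      mul_nonneg (mul_nonneg (hπpos x).le (hP0 x y)) (sq_nonneg _)
  rw [sum_sum_mul_sub_sq_of_mulVec_eq_smul hP1 hrev hψ] at hdirichlet
  have := nonneg_of_mul_nonneg_left hdirichlet (sum_mul_sq_pos hπpos hψ0)
  linarith

end Reversible

theorem finsum_mem_setOf_eq_sum_filter {α M : Type*} [AddCommMonoid M] {f : α → M}
    {S : Finset α} (hS : Function.support f ⊆ S) (Q : α → Prop) [DecidablePred Q] :
    ∑ᶠ p ∈ {p | Q p}, f p = ∑ p ∈ S with Q p, f p := by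
  refine finsum_mem_eq_sum_of_inter_support_eq f (Set.ext fun p => ?_)
  simp only [Set.mem_inter_iff, Set.mem_ofPred_eq, Finset.coe_filter, Function.mem_support]
  exact ⟨fun h => ⟨⟨hS h.2, h.1⟩, h.2⟩, fun h => ⟨h.1.2, h.2⟩⟩

section Flow

variable {Ω : Type*} {f : List Ω → ℝ}

theorem flowEdge_eq_sum [DecidableEq Ω] {S : Finset (List Ω)} (hS : Function.support f ⊆ S)
    (a b : Ω) :
    flowEdge f a b = ∑ p ∈ S with (a, b) ∈ p.consecutivePairs, f p := by
  simp_rw [flowEdge, usesOrientedEdge_iff_mem_consecutivePairs]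
  exact finsum_mem_setOf_eq_sum_filter hS _

theorem flowEdge_eq_zero_of_not_adj {adj : Ω → Ω → Prop}
    (hchain : ∀ p, f p ≠ 0 → p.IsChain adj) {a b : Ω} (hab : ¬ adj a b) :
    flowEdge f a b = 0 := by
  refine finsum_mem_eq_zero_of_forall_eq_zero fun p ⟨l₁, l₂, hp⟩ => ?_
  by_contra hfp
  exact hab (List.isChain_iff_forall_rel_of_append_cons_cons.mp (hchain p hfp) hp)

theorem sum_mul_sum_consecutivePairs_eq [Fintype Ω] [DecidableEq Ω] {S : Finset (List Ω)}
    (hS : Function.support f ⊆ S) (g : Ω → Ω → ℝ) :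
    ∑ p ∈ S, f p * ∑ e ∈ p.consecutivePairs.toFinset, g e.1 e.2 =
      ∑ a, ∑ b, flowEdge f a b * g a b := by
  simp_rw [flowEdge_eq_sum hS, Finset.sum_mul, Finset.mul_sum]
  rw [Finset.sum_comm' (t' := Finset.univ) (s' := fun e => S.filter (e ∈ ·.consecutivePairs))
    (by simp), ← Finset.univ_product_univ, Finset.sum_product]

open Classical in
theorem sum_sum_sum_filter_isSimplePathFrom_le [Fintype Ω] (adj : Ω → Ω → Prop)
    (S : Finset (List Ω)) {F : List Ω → ℝ} (hF : ∀ p ∈ S, 0 ≤ F p) :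
    ∑ x, ∑ y, ∑ p ∈ S with IsSimplePathFrom adj p x y, F p ≤ ∑ p ∈ S, F p := by
  have hdisj : ((Finset.univ : Finset (Ω × Ω)) : Set (Ω × Ω)).PairwiseDisjoint
      fun e => S.filter (IsSimplePathFrom adj · e.1 e.2) := by
    rintro ⟨x, y⟩ - ⟨x', y'⟩ - hne
    refine Finset.disjoint_filter.mpr fun p _ hp hp' => hne ?_
    obtain ⟨-, -, hx, hy, -⟩ := hp
    obtain ⟨-, -, hx', hy', -⟩ := hp'
    simp_all
  rw [← Finset.sum_product', Finset.univ_product_univ, ← Finset.sum_biUnion hdisj]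
  exact Finset.sum_le_sum_of_subset_of_nonneg
    (Finset.biUnion_subset.mpr fun _ _ => Finset.filter_subset _ _) fun p hp _ => hF p hp

theorem finite_support_of_isSimplePathFrom [Fintype Ω] {adj : Ω → Ω → Prop}
    (hpath : ∀ p, f p ≠ 0 → ∃ x y, IsSimplePathFrom adj p x y) :
    (Function.support f).Finite :=
  (List.finite_length_le Ω (Fintype.card Ω)).subset fun p hp =>
    let ⟨_, _, h⟩ := hpath p hp
    h.1.length_le_card

theorem flowEdge_le_mul_of_mem_upperBounds {P : Matrix Ω Ω ℝ} {π : Ω → ℝ} {ρ : ℝ}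
    (hP0 : ∀ x y, 0 ≤ P x y) (hπpos : ∀ x, 0 < π x)
    (hchain : ∀ p, f p ≠ 0 → p.IsChain fun a b => 0 < P a b)
    (hρ : ρ ∈ upperBounds {r | ∃ a b, 0 < P a b ∧ r = flowEdge f a b / (π a * P a b)})
    (a b : Ω) : flowEdge f a b ≤ ρ * (π a * P a b) := by
  rcases (hP0 a b).lt_or_eq with hab | hab
  · exact (div_le_iff₀ (mul_pos (hπpos a) hab)).mp (hρ ⟨a, b, hab, rfl⟩)
  · rw [flowEdge_eq_zero_of_not_adj hchain hab.not_lt, ← hab, mul_zero, mul_zero]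

theorem sum_sum_mul_mul_sub_sq_le_of_flow [Fintype Ω] {adj : Ω → Ω → Prop} {π : Ω → ℝ}
    {Q : Ω → Ω → ℝ} {ρ : ℝ} {ℓ : ℕ} (hf0 : ∀ p, 0 ≤ f p) (hfin : (Function.support f).Finite)
    (hflow : ∀ x y, x ≠ y → ∑ᶠ p ∈ {p | IsSimplePathFrom adj p x y}, f p = π x * π y)
    (hload : ∀ a b, flowEdge f a b ≤ ρ * Q a b) (hℓ : ∀ p, 0 < f p → p.length - 1 ≤ ℓ)
    (ψ : Ω → ℝ) :
    ∑ x, ∑ y, π x * π y * (ψ x - ψ y) ^ 2 ≤ ρ * ℓ * ∑ x, ∑ y, Q x y * (ψ x - ψ y) ^ 2 := by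
  classical
  set S := hfin.toFinset
  have hS : Function.support f ⊆ S := by simp [S]
  set E : List Ω → ℝ := fun p => ∑ e ∈ p.consecutivePairs.toFinset, (ψ e.1 - ψ e.2) ^ 2
  have hE : ∀ p, 0 ≤ E p := fun p => Finset.sum_nonneg fun _ _ => sq_nonneg _
  calc ∑ x, ∑ y, π x * π y * (ψ x - ψ y) ^ 2
      = ∑ x, ∑ y, ∑ p ∈ S with IsSimplePathFrom adj p x y, f p * (ψ x - ψ y) ^ 2 := by
        refine Finset.sum_congr rfl fun x _ => Finset.sum_congr rfl fun y _ => ?_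
        rcases eq_or_ne x y with rfl | hxy
        · simp
        · rw [← Finset.sum_mul, ← finsum_mem_setOf_eq_sum_filter hS, hflow x y hxy]
    _ ≤ ∑ x, ∑ y, ∑ p ∈ S with IsSimplePathFrom adj p x y, f p * (ℓ * E p) := by
        gcongr with x _ y _ p hp
        · exact hf0 p
        obtain ⟨hpS, hpath⟩ := Finset.mem_filter.mp hp
        have hlen : p.length - 1 ≤ ℓ := hℓ p ((hf0 p).lt_of_ne' (by simpa [S] using hpS))
        exact (hpath.sq_sub_le ψ).trans (by gcongr)
    _ ≤ ∑ p ∈ S, f p * (ℓ * E p) :=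
        sum_sum_sum_filter_isSimplePathFrom_le adj S fun p _ =>
          mul_nonneg (hf0 p) (mul_nonneg ℓ.cast_nonneg (hE p))
    _ = ℓ * ∑ a, ∑ b, flowEdge f a b * (ψ a - ψ b) ^ 2 := by
        rw [← sum_mul_sum_consecutivePairs_eq hS, Finset.mul_sum]
        exact Finset.sum_congr rfl fun p _ => by ring
    _ ≤ ℓ * ∑ a, ∑ b, ρ * Q a b * (ψ a - ψ b) ^ 2 := by
        gcongr with a _ b _
        exact hload a b
    _ = ρ * ℓ * ∑ x, ∑ y, Q x y * (ψ x - ψ y) ^ 2 := by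
        simp only [Finset.mul_sum]
        exact Finset.sum_congr rfl fun _ _ => Finset.sum_congr rfl fun _ _ => by ring

end Flow

theorem second_eigenvalue_flow_bound_general {Ω : Type*} [Fintype Ω] (P : Matrix Ω Ω ℝ) (π : Ω → ℝ)
    (hP0 : ∀ x y, 0 ≤ P x y) (hP1 : ∀ x, ∑ y, P x y = 1)
    (hπpos : ∀ x, 0 < π x) (hπsum : ∑ x, π x = 1)
    (hrev : ∀ x y, π x * P x y = π y * P y x)
    (f : List Ω → ℝ)
    (hf0 : ∀ p, 0 ≤ f p)
    (hfsupp : ∀ p, f p ≠ 0 →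
      ∃ x y, x ≠ y ∧ IsSimplePathFrom (fun a b => 0 < P a b) p x y)
    (hflow : ∀ x y : Ω, x ≠ y →
      (∑ᶠ p ∈ {p : List Ω | IsSimplePathFrom (fun a b => 0 < P a b) p x y}, f p) =
        π x * π y)
    (ρ : ℝ)
    (hρ : IsGreatest
      {r : ℝ | ∃ a b : Ω, 0 < P a b ∧ r = flowEdge f a b / (π a * P a b)} ρ)
    (ℓ : ℕ)
    (hℓ : IsGreatest {k : ℕ | ∃ p : List Ω, 0 < f p ∧ k = p.length - 1} ℓ)
    (lam : ℝ)
    (hlam : ∃ ψ : Ω → ℝ, ψ ≠ 0 ∧ P.mulVec ψ = lam • ψ) (hlam1 : lam ≠ 1) :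
    (1 - lam)⁻¹ ≤ ρ * (ℓ : ℝ) := by
  obtain ⟨ψ, hψ0, hψ⟩ := hlam
  have hV := sum_mul_sq_pos hπpos hψ0
  have hgap : 0 < 1 - lam :=
    sub_pos.mpr ((le_one_of_mulVec_eq_smul hP0 hP1 hπpos hrev hψ0 hψ).lt_of_ne hlam1)
  have hvariance : ∑ x, ∑ y, π x * π y * (ψ x - ψ y) ^ 2 = 2 * ∑ x, π x * ψ x ^ 2 := by
    rw [Finset.sum_sum_mul_mul_sub_sq, hπsum,
      sum_mul_eq_zero_of_mulVec_eq_smul hP1 hrev hψ hlam1]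
    ring
  have hpath : ∀ p, f p ≠ 0 → ∃ x y, IsSimplePathFrom (fun a b => 0 < P a b) p x y :=
    fun p hp => let ⟨x, y, _, h⟩ := hfsupp p hp; ⟨x, y, h⟩
  have hload := flowEdge_le_mul_of_mem_upperBounds hP0 hπpos
    (fun p hp => let ⟨_, _, h⟩ := hpath p hp; h.2.1) hρ.2
  have hpoincare := sum_sum_mul_mul_sub_sq_le_of_flow hf0
    (finite_support_of_isSimplePathFrom hpath) hflow hload (fun p hp => hℓ.2 ⟨p, hp, rfl⟩) ψ
  rw [hvariance, sum_sum_mul_sub_sq_of_mulVec_eq_smul hP1 hrev hψ] at hpoincare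
  rw [inv_le_iff_one_le_mul₀' hgap]
  exact le_of_mul_le_mul_right (by linarith) (mul_pos two_pos hV)

/-- Let `M` be an ergodic time-reversible Markov chain on a finite
state space `Ω` with transition matrix `P` and stationary distribution `π`.  For any
flow `f` in the underlying graph of `M`, with maximum load `ρ` and longest
positive-flow path length `ℓ`, the second-largest eigenvalue `λ₁` (here: any real
eigenvalue `λ ≠ 1`) satisfies `(1 - λ₁)⁻¹ ≤ ρ ℓ`. -/
theorem second_eigenvalue_flow_bound {Ω : Type*} [Fintype Ω] [DecidableEq Ω]
    [Nonempty Ω] (P : Matrix Ω Ω ℝ) (π : Ω → ℝ)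
    (hP0 : ∀ x y, 0 ≤ P x y) (hP1 : ∀ x, ∑ y, P x y = 1)
    (hπpos : ∀ x, 0 < π x) (hπsum : ∑ x, π x = 1)
    (hrev : ∀ x y, π x * P x y = π y * P y x)
    (herg : ∃ t : ℕ, ∀ x y, 0 < (P ^ t) x y)
    (f : List Ω → ℝ)
    (hf0 : ∀ p, 0 ≤ f p)
    (hfsupp : ∀ p, f p ≠ 0 →
      ∃ x y, x ≠ y ∧ IsSimplePathFrom (fun a b => 0 < P a b) p x y)
    (hflow : ∀ x y : Ω, x ≠ y →
      (∑ᶠ p ∈ {p : List Ω | IsSimplePathFrom (fun a b => 0 < P a b) p x y}, f p) =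
        π x * π y)
    (ρ : ℝ)
    (hρ : IsGreatest
      {r : ℝ | ∃ a b : Ω, 0 < P a b ∧ r = flowEdge f a b / (π a * P a b)} ρ)
    (ℓ : ℕ)
    (hℓ : IsGreatest {k : ℕ | ∃ p : List Ω, 0 < f p ∧ k = p.length - 1} ℓ)
    (lam : ℝ)
    (hlam : ∃ ψ : Ω → ℝ, ψ ≠ 0 ∧ P.mulVec ψ = lam • ψ) (hlam1 : lam ≠ 1) :
    (1 - lam)⁻¹ ≤ ρ * (ℓ : ℝ) :=
  second_eigenvalue_flow_bound_general P π hP0 hP1 hπpos hπsum hrev f hf0 hfsupp hflow ρ hρ ℓ hℓ lam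
    hlam hlam1
end

section
/- Let M be an ergodic time-reversible Markov chain on a finite state space Ω with transition matrix P and stationary distribution π. For each x ∈ Ω fix a closed walk σ_x from x to x of odd length in the underlying graph 𝒢 of the chain, let Σ = {σ_x : x ∈ Ω}, and let η = η(Σ) = max_{e∈Γ} (1/Q(e)) · ∑_{x∈Ω, e∈σ_x} |σ_x|·π(x). Then for every function ψ : Ω → ℝ, one has E_π(ψ²) ≤ (η/2)·( E_π(ψ²) + ⟨ψ, Pψ⟩_π ), where E_π(ψ²) = ∑_{x∈Ω} ψ(x)²π(x) and ⟨ψ, Pψ⟩_π = ∑_{x∈Ω} ψ(x)(Pψ)(x)π(x). -/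
attribute [local instance] Classical.propDecidable

/-- The walk (given as its list of vertices) `p` uses the undirected edge `{a,b}`:
`a, b` occur consecutively in `p` in either order. -/
def WalkUses {Ω : Type*} (p : List Ω) (a b : Ω) : Prop :=
  (∃ l₁ l₂, p = l₁ ++ a :: b :: l₂) ∨ (∃ l₁ l₂, p = l₁ ++ b :: a :: l₂)

/-!
Along an odd closed walk `x = x₀, x₁, …, x_L = x` the alternating sum of `ψ xᵢ + ψ xᵢ₊₁`
telescopes to `2 ψ x`, so Cauchy–Schwarz gives `4 ψ(x)² ≤ L ∑ᵢ (ψ xᵢ + ψ xᵢ₊₁)²`. For the right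
side to count every edge at most once, lift the walk to the bipartite double cover `Ω × Bool`,
where it runs from `(x, true)` to `(x, false)`, and shorten it to a path there: the edges of the
path are distinct and project injectively onto oriented edges used by the walk.
Weighting by `π x`, exchanging the sums and bounding the load of each edge `(a, b)` by
`η Q(a, b)` gives `4 E_π(ψ²) ≤ η ∑ Q(a, b) (ψ a + ψ b)²`, and by reversibility the last sum is
`2 (E_π(ψ²) + ⟨ψ, Pψ⟩_π)`.
-/

open Finset SimpleGraph

section DoubleCoverOfRel

variable {Ω : Type*} (R : Ω → Ω → Prop) [Std.Symm R]

/-- Unlike `SimpleGraph.bipartiteDoubleCover`, this accepts a relation with loops (the chain's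
self-loops), each of which becomes an ordinary edge of the cover. -/
def doubleCoverOfRel : SimpleGraph (Ω × Bool) where
  Adj u v := u.2 ≠ v.2 ∧ R u.1 v.1
  symm := ⟨fun _ _ h => ⟨h.1.symm, Std.Symm.symm _ _ h.2⟩⟩
  loopless := ⟨fun _ h => h.1 rfl⟩

variable {R}

theorem exists_walk_doubleCoverOfRel_of_isChain {l : List Ω} {a b : Ω}
    (hchain : (a :: l).IsChain R) (hlast : (a :: l).getLast? = some b) (s : Bool) :
    ∃ p : (doubleCoverOfRel R).Walk (a, s) (b, s ^^ decide (Odd l.length)),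
      p.length = l.length := by
  induction l generalizing a s with
  | nil =>
    obtain rfl : a = b := by simpa using hlast
    exact ⟨Walk.nil.copy rfl (by simp), by simp⟩
  | cons c l ih =>
    obtain ⟨hac, hchain⟩ := List.isChain_cons_cons.mp hchain
    obtain ⟨p, hp⟩ := ih hchain (by simpa using hlast) (!s)
    have hadj : (doubleCoverOfRel R).Adj (a, s) (c, !s) := by
      simpa [doubleCoverOfRel] using hac
    exact ⟨(Walk.cons hadj p).copy rfl
      (by cases s <;> simp [Nat.odd_add_one, ← Nat.not_even_iff_odd]), by simp [hp]⟩

theorem sum_darts_sub_eq {V : Type*} {G : SimpleGraph V} (f : V → ℝ) {u v : V}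
    (p : G.Walk u v) : (p.darts.map fun d => f d.fst - f d.snd).sum = f u - f v := by
  induction p with
  | nil => simp
  | cons h p ih => simp [ih]

def signedLift (ψ : Ω → ℝ) (u : Ω × Bool) : ℝ := if u.2 then ψ u.1 else -ψ u.1

-- Oriented from the `true` end to the `false` end, so that distinct edges give distinct pairs.
def coverDartBase (d : (doubleCoverOfRel R).Dart) : Ω × Ω :=
  if d.fst.2 then (d.fst.1, d.snd.1) else (d.snd.1, d.fst.1)

theorem rel_coverDartBase (d : (doubleCoverOfRel R).Dart) :
    R (coverDartBase d).1 (coverDartBase d).2 := by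
  obtain ⟨⟨⟨x, s⟩, y, _⟩, -, hxy⟩ := d
  cases s <;> simp [coverDartBase, Std.Symm.symm _ _ hxy, hxy]

theorem edge_eq_coverDartBase (d : (doubleCoverOfRel R).Dart) :
    d.edge = s(((coverDartBase d).1, true), ((coverDartBase d).2, false)) := by
  obtain ⟨⟨⟨x, s⟩, ⟨y, t⟩⟩, hst, hxy⟩ := d
  dsimp only at hst hxy
  cases s <;> cases t <;> simp at hst <;> simp [coverDartBase, Dart.edge, Sym2.eq_swap]

theorem signedLift_sub_sq (ψ : Ω → ℝ) (d : (doubleCoverOfRel R).Dart) :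
    (signedLift ψ d.fst - signedLift ψ d.snd) ^ 2 =
      (ψ (coverDartBase d).1 + ψ (coverDartBase d).2) ^ 2 := by
  obtain ⟨⟨⟨x, s⟩, ⟨y, t⟩⟩, hst, hxy⟩ := d
  dsimp only at hst hxy
  cases s <;> cases t <;> simp at hst <;>
    simp only [coverDartBase, signedLift, Bool.false_eq_true, if_true, if_false] <;> ring

theorem sq_add_le_length_mul_sum_of_isPath [Fintype Ω] (ψ : Ω → ℝ) {a b : Ω}
    {p : (doubleCoverOfRel R).Walk (a, true) (b, false)} (hp : p.IsPath) :
    (ψ a + ψ b) ^ 2 ≤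
      p.length * ∑ q ∈ univ.filter (fun q : Ω × Ω => R q.1 q.2), (ψ q.1 + ψ q.2) ^ 2 := by
  have hdarts : p.darts.Nodup := p.darts_nodup_of_support_nodup hp.support_nodup
  have hinj : Set.InjOn coverDartBase (p.darts.toFinset : Set (doubleCoverOfRel R).Dart) := by
    intro d hd d' hd' h
    refine List.inj_on_of_nodup_map hp.edges_nodup (by simpa using hd) (by simpa using hd') ?_
    rw [edge_eq_coverDartBase d, edge_eq_coverDartBase d', h]
  calc (ψ a + ψ b) ^ 2
      = (∑ d ∈ p.darts.toFinset, (signedLift ψ d.fst - signedLift ψ d.snd)) ^ 2 := by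
        rw [List.sum_toFinset _ hdarts, sum_darts_sub_eq]
        simp [signedLift]
    _ ≤ #p.darts.toFinset *
          ∑ d ∈ p.darts.toFinset, (signedLift ψ d.fst - signedLift ψ d.snd) ^ 2 :=
        sq_sum_le_card_mul_sum_sq
    _ = p.length * ∑ q ∈ p.darts.toFinset.image coverDartBase, (ψ q.1 + ψ q.2) ^ 2 := by
        rw [List.toFinset_card_of_nodup hdarts, p.length_darts, sum_image hinj]
        simp only [signedLift_sub_sq]
    _ ≤ p.length * ∑ q ∈ univ.filter (fun q : Ω × Ω => R q.1 q.2), (ψ q.1 + ψ q.2) ^ 2 := by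
        gcongr
        intro q hq
        obtain ⟨d, -, rfl⟩ := mem_image.mp hq
        simpa using rel_coverDartBase d

end DoubleCoverOfRel

section WalkUses

variable {Ω : Type*}

instance (w : List Ω) : Std.Symm (WalkUses w) := ⟨fun _ _ => Or.symm⟩

theorem isChain_walkUses (w : List Ω) : w.IsChain (WalkUses w) :=
  List.isChain_iff_forall_rel_of_append_cons_cons.mpr fun _ _ l₁ l₂ h => Or.inl ⟨l₁, l₂, h⟩

theorem sq_two_mul_le_of_odd_closed_walk [Fintype Ω] (ψ : Ω → ℝ) {w : List Ω} {x : Ω}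
    (hstart : w.head? = some x) (hend : w.getLast? = some x) (hodd : Odd (w.length - 1)) :
    (2 * ψ x) ^ 2 ≤ ((w.length : ℝ) - 1) *
      ∑ q ∈ univ.filter (fun q : Ω × Ω => WalkUses w q.1 q.2), (ψ q.1 + ψ q.2) ^ 2 := by
  obtain ⟨t, rfl⟩ := List.head?_eq_some_iff.mp hstart
  replace hodd : Odd t.length := by simpa using hodd
  obtain ⟨p, hp⟩ :=
    exists_walk_doubleCoverOfRel_of_isChain (isChain_walkUses (x :: t)) hend true
  have hflip : (x, true ^^ decide (Odd t.length)) = (x, false) := by simp [hodd]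
  let path := p.bypass.copy rfl hflip
  calc (2 * ψ x) ^ 2 = (ψ x + ψ x) ^ 2 := by ring
    _ ≤ path.length * ∑ q ∈ univ.filter (fun q : Ω × Ω => WalkUses (x :: t) q.1 q.2),
          (ψ q.1 + ψ q.2) ^ 2 :=
        sq_add_le_length_mul_sum_of_isPath ψ (by simpa [path] using p.bypass_isPath)
    _ ≤ ((x :: t).length - 1 : ℝ) *
          ∑ q ∈ univ.filter (fun q : Ω × Ω => WalkUses (x :: t) q.1 q.2), (ψ q.1 + ψ q.2) ^ 2 := by
        gcongr
        simpa [path, hp] using p.length_bypass_le_length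

end WalkUses

theorem sum_mul_sum_filter_comm {ι κ : Type*} [Fintype ι] [Fintype κ] (U : ι → κ → Prop)
    (c : ι → ℝ) (g : κ → ℝ) :
    ∑ i, c i * ∑ k ∈ univ.filter (U i), g k = ∑ k, g k * ∑ i ∈ univ.filter (U · k), c i := by
  simp only [sum_filter, mul_sum, mul_ite, mul_zero]
  rw [sum_comm]
  simp only [mul_comm]

section Reversible

variable {Ω : Type*} {P : Matrix Ω Ω ℝ} {π : Ω → ℝ}

theorem pos_symm_of_reversible (hπ : ∀ x, 0 < π x) (hrev : ∀ x y, π x * P x y = π y * P y x)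
    {a b : Ω} (h : 0 < P b a) : 0 < P a b :=
  pos_of_mul_pos_right (by rw [hrev]; exact mul_pos (hπ b) h) (hπ a).le

theorem pos_of_walkUses_of_reversible (hπ : ∀ x, 0 < π x)
    (hrev : ∀ x y, π x * P x y = π y * P y x) {w : List Ω}
    (hw : w.IsChain fun a b => 0 < P a b) {a b : Ω} (h : WalkUses w a b) : 0 < P a b := by
  rcases h with ⟨l₁, l₂, h⟩ | ⟨l₁, l₂, h⟩
  · exact List.isChain_iff_forall_rel_of_append_cons_cons.mp hw h
  · exact pos_symm_of_reversible hπ hrev (List.isChain_iff_forall_rel_of_append_cons_cons.mp hw h)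

theorem sum_filter_walkUses_le_of_isGreatest [Fintype Ω] (hP0 : ∀ x y, 0 ≤ P x y)
    (hπ : ∀ x, 0 < π x) (hrev : ∀ x y, π x * P x y = π y * P y x) {σ : Ω → List Ω}
    (hσ : ∀ x, (σ x).IsChain fun a b => 0 < P a b) {c : Ω → ℝ} (hc : ∀ x, 0 ≤ c x) {η : ℝ}
    (hη : IsGreatest {r : ℝ | ∃ a b : Ω, 0 < P a b ∧
      r = (π a * P a b)⁻¹ * ∑ x ∈ univ.filter (fun x => WalkUses (σ x) a b), c x} η)
    (a b : Ω) :
    ∑ x ∈ univ.filter (fun x => WalkUses (σ x) a b), c x ≤ η * (π a * P a b) := by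
  rcases (univ.filter fun x => WalkUses (σ x) a b).eq_empty_or_nonempty with h | ⟨x, hx⟩
  · obtain ⟨a', b', hab', hη⟩ := hη.1
    have hη0 : 0 ≤ η :=
      hη ▸ mul_nonneg (inv_nonneg.2 (mul_pos (hπ a') hab').le) (sum_nonneg fun x _ => hc x)
    rw [h, sum_empty]
    exact mul_nonneg hη0 (mul_nonneg (hπ a).le (hP0 a b))
  · have hab := pos_of_walkUses_of_reversible hπ hrev (hσ x) (mem_filter.1 hx).2
    rw [mul_comm η]
    exact (inv_mul_le_iff₀ (mul_pos (hπ a) hab)).1 (hη.2 ⟨a, b, hab, rfl⟩)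

theorem sum_mul_add_sq_eq_of_reversible [Fintype Ω] (hP1 : ∀ x, ∑ y, P x y = 1)
    (hrev : ∀ x y, π x * P x y = π y * P y x) (ψ : Ω → ℝ) :
    ∑ q : Ω × Ω, π q.1 * P q.1 q.2 * (ψ q.1 + ψ q.2) ^ 2 =
      2 * (∑ x, ψ x ^ 2 * π x + ∑ x, ψ x * P.mulVec ψ x * π x) := by
  have hleft : ∀ f : Ω → ℝ, ∑ a, ∑ b, π a * P a b * f a = ∑ a, f a * π a := fun f =>
    sum_congr rfl fun a _ => by rw [← sum_mul, ← mul_sum, hP1, mul_one, mul_comm]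
  have hright : ∀ f : Ω → ℝ, ∑ a, ∑ b, π a * P a b * f b = ∑ a, f a * π a := fun f => by
    rw [← hleft f, sum_comm]
    exact sum_congr rfl fun b _ => sum_congr rfl fun a _ => by rw [hrev]
  have hcross : ∑ a, ∑ b, 2 * (ψ a * (P a b * ψ b) * π a) =
      2 * ∑ a, ψ a * P.mulVec ψ a * π a := by
    simp only [Matrix.mulVec, dotProduct, mul_sum, sum_mul]
  calc ∑ q : Ω × Ω, π q.1 * P q.1 q.2 * (ψ q.1 + ψ q.2) ^ 2
      = ∑ a, ∑ b, (π a * P a b * ψ a ^ 2 + π a * P a b * ψ b ^ 2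
          + 2 * (ψ a * (P a b * ψ b) * π a)) := by
        rw [Fintype.sum_prod_type]
        exact sum_congr rfl fun a _ => sum_congr rfl fun b _ => by ring
    _ = _ := by
        simp only [sum_add_distrib]
        rw [hleft (ψ · ^ 2), hright (ψ · ^ 2), hcross]
        ring

end Reversible

theorem dirichlet_odd_cycle_inequality_general {Ω : Type*} [Fintype Ω]
    (P : Matrix Ω Ω ℝ) (π : Ω → ℝ)
    (hP0 : ∀ x y, 0 ≤ P x y) (hP1 : ∀ x, ∑ y, P x y = 1)
    (hπpos : ∀ x, 0 < π x)
    (hrev : ∀ x y, π x * P x y = π y * P y x)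
    (σ : Ω → List Ω)
    (hσstart : ∀ x, (σ x).head? = some x)
    (hσend : ∀ x, (σ x).getLast? = some x)
    (hσchain : ∀ x, (σ x).Chain' fun a b => 0 < P a b)
    (hσodd : ∀ x, Odd ((σ x).length - 1))
    (η : ℝ)
    (hη : IsGreatest
      {r : ℝ | ∃ a b : Ω, 0 < P a b ∧
        r = (π a * P a b)⁻¹ *
          ∑ x ∈ Finset.univ.filter (fun x => WalkUses (σ x) a b),
            (((σ x).length : ℝ) - 1) * π x} η) :
    ∀ ψ : Ω → ℝ,
      ∑ x, ψ x ^ 2 * π x ≤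
        η / 2 * (∑ x, ψ x ^ 2 * π x + ∑ x, ψ x * P.mulVec ψ x * π x) := by
  intro ψ
  have hlen : ∀ x, (0 : ℝ) ≤ (σ x).length - 1 := fun x =>
    sub_nonneg.2 (by exact_mod_cast (hσodd x).pos.trans_le (Nat.sub_le _ 1))
  have hload := sum_filter_walkUses_le_of_isGreatest hP0 hπpos hrev hσchain
    (c := fun x => (((σ x).length : ℝ) - 1) * π x) (fun x => mul_nonneg (hlen x) (hπpos x).le) hη
  have h4 : 4 * ∑ x, ψ x ^ 2 * π x ≤
      η * (2 * (∑ x, ψ x ^ 2 * π x + ∑ x, ψ x * P.mulVec ψ x * π x)) :=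
    calc 4 * ∑ x, ψ x ^ 2 * π x = ∑ x, π x * (2 * ψ x) ^ 2 := by
          rw [mul_sum]; exact sum_congr rfl fun x _ => by ring
      _ ≤ ∑ x, π x * ((((σ x).length : ℝ) - 1) *
            ∑ q ∈ univ.filter (fun q : Ω × Ω => WalkUses (σ x) q.1 q.2), (ψ q.1 + ψ q.2) ^ 2) := by
          gcongr with x
          · exact (hπpos x).le
          · exact sq_two_mul_le_of_odd_closed_walk ψ (hσstart x) (hσend x) (hσodd x)
      _ = ∑ q : Ω × Ω, (ψ q.1 + ψ q.2) ^ 2 *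
            ∑ x ∈ univ.filter (fun x => WalkUses (σ x) q.1 q.2),
              (((σ x).length : ℝ) - 1) * π x := by
          rw [← sum_mul_sum_filter_comm]
          exact sum_congr rfl fun x _ => by ring
      _ ≤ ∑ q : Ω × Ω, (ψ q.1 + ψ q.2) ^ 2 * (η * (π q.1 * P q.1 q.2)) := by
          gcongr with q; exact hload q.1 q.2
      _ = η * (2 * (∑ x, ψ x ^ 2 * π x + ∑ x, ψ x * P.mulVec ψ x * π x)) := by
          rw [← sum_mul_add_sq_eq_of_reversible hP1 hrev, mul_sum]
          exact sum_congr rfl fun q _ => by ring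
  linarith

/-- Let `M` be an ergodic time-reversible Markov chain on a finite
state space, and for each state `x` fix a closed walk `σ x` from `x` to `x` of odd
length in the underlying graph of the chain.  With
`η = max_{e ∈ Γ} Q(e)⁻¹ ∑_{x : e ∈ σ_x} |σ_x| π(x)`, one has, for every
`ψ : Ω → ℝ`, `E_π(ψ²) ≤ (η/2) (E_π(ψ²) + ⟨ψ, Pψ⟩_π)`. -/
theorem dirichlet_odd_cycle_inequality {Ω : Type*} [Fintype Ω] [DecidableEq Ω]
    [Nonempty Ω] (P : Matrix Ω Ω ℝ) (π : Ω → ℝ)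
    (hP0 : ∀ x y, 0 ≤ P x y) (hP1 : ∀ x, ∑ y, P x y = 1)
    (hπpos : ∀ x, 0 < π x) (hπsum : ∑ x, π x = 1)
    (hrev : ∀ x y, π x * P x y = π y * P y x)
    (herg : ∃ t : ℕ, ∀ x y, 0 < (P ^ t) x y)
    (σ : Ω → List Ω)
    (hσstart : ∀ x, (σ x).head? = some x)
    (hσend : ∀ x, (σ x).getLast? = some x)
    (hσchain : ∀ x, (σ x).Chain' fun a b => 0 < P a b)
    (hσodd : ∀ x, Odd ((σ x).length - 1))
    (η : ℝ)
    (hη : IsGreatest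
      {r : ℝ | ∃ a b : Ω, 0 < P a b ∧
        r = (π a * P a b)⁻¹ *
          ∑ x ∈ Finset.univ.filter (fun x => WalkUses (σ x) a b),
            (((σ x).length : ℝ) - 1) * π x} η) :
    ∀ ψ : Ω → ℝ,
      ∑ x, ψ x ^ 2 * π x ≤
        η / 2 * (∑ x, ψ x ^ 2 * π x + ∑ x, ψ x * P.mulVec ψ x * π x) :=
  dirichlet_odd_cycle_inequality_general P π hP0 hP1 hπpos hrev σ hσstart hσend hσchain hσodd η hη
end
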